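/- Let Γ be a simple polygon, A a finite set of points in Γ, and consider the visibility decomposition of Γ with respect to A. Then any two points in the interior of a single visibility region are seen by exactly the same subset of points of A. -/

import Mathlib

open Set

noncomputable section

/-- Points of the Euclidean plane. -/
abbrev Pt : Type := EuclideanSpace ℝ (Fin 2)

/-- A simple polygon: a compact region of the plane bounded by a simple closed
polygonal curve.  Vertices are indexed by `ℤ`, periodically with period `n`. -/
structure SimplePolygon where
  carrier : Set Pt
  n : ℕ
  three_le : 3 ≤ n
  vertex : ℤ → Pt
  periodic : ∀ i : ℤ, vertex (i + n) = vertex i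
  vertex_inj : ∀ i j : ℤ, 0 ≤ i → i < n → 0 ≤ j → j < n → vertex i = vertex j → i = j
  compact : IsCompact carrier
  connected : IsConnected carrier
  regular : carrier = closure (interior carrier)
  boundary_eq : frontier carrier = ⋃ i : ℤ, segment ℝ (vertex i) (vertex (i + 1))
  adj_edges : ∀ i j : ℤ, (n : ℤ) ∣ (j - (i + 1)) → ¬ (n : ℤ) ∣ (j - i) →
    segment ℝ (vertex i) (vertex (i + 1)) ∩ segment ℝ (vertex j) (vertex (j + 1)) = {vertex j}
  nonadj_edges : ∀ i j : ℤ, ¬ (n : ℤ) ∣ (j - i) → ¬ (n : ℤ) ∣ (j - (i + 1)) →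
    ¬ (n : ℤ) ∣ (i - (j + 1)) →
    Disjoint (segment ℝ (vertex i) (vertex (i + 1))) (segment ℝ (vertex j) (vertex (j + 1)))

/-- `A`, `B` span a (maximal) boundary segment of the set `R`. -/
def IsBoundarySegment (R : Set Pt) (A B : Pt) : Prop :=
  A ≠ B ∧ segment ℝ A B ⊆ frontier R ∧
  ∀ A' B' : Pt, segment ℝ A B ⊆ segment ℝ A' B' → segment ℝ A' B' ⊆ frontier R →
    segment ℝ A' B' = segment ℝ A B

/-- `ℓ` is a support line of `R`: a line containing a boundary segment of the closure of `R`. -/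
def IsSupportLine (R : Set Pt) (ℓ : AffineSubspace ℝ Pt) : Prop :=
  ∃ A B : Pt, IsBoundarySegment (closure R) A B ∧ ℓ = affineSpan ℝ ({A, B} : Set Pt)

/-- Two regions are adjacent when they share a common boundary edge
(a nondegenerate segment). -/
def AdjacentRegions (R R' : Set Pt) : Prop :=
  R ≠ R' ∧ ∃ C D : Pt, C ≠ D ∧ segment ℝ C D ⊆ closure R ∩ closure R'

namespace SimplePolygon

variable (Γ : SimplePolygon)

/-- `G` sees `A`: the segment `GA` is contained in the polygon. -/
def Sees (G A : Pt) : Prop := segment ℝ G A ⊆ Γ.carrier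

/-- The guard set `F` (visually) covers the set `S`. -/
def Covers (F S : Set Pt) : Prop := ∀ A ∈ S, ∃ G ∈ F, Γ.Sees G A

/-- The view of a point `P`: all points of the polygon seen by `P`. -/
def View (P : Pt) : Set Pt := {A | A ∈ Γ.carrier ∧ Γ.Sees P A}

/-- The hidden region of a guard configuration `F`: points of the polygon seen by no guard. -/
def Hidden (F : Set Pt) : Set Pt := {A | A ∈ Γ.carrier ∧ ∀ G ∈ F, ¬ Γ.Sees G A}

/-- The polygon is normal: every configuration of guards covering the walls covers everything. -/
def Normal : Prop :=
  ∀ F : Set Pt, F ⊆ Γ.carrier → Γ.Covers F (frontier Γ.carrier) → Γ.Covers F Γ.carrier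

/-- The polygon is normal with respect to `A`: every configuration of guards inside `A`
covering the walls covers everything. -/
def NormalWrt (A : Set Pt) : Prop :=
  ∀ F : Set Pt, F ⊆ A → Γ.Covers F (frontier Γ.carrier) → Γ.Covers F Γ.carrier

/-- The corner at `vertex i` is reflex (interior angle exceeding 180°): points slightly
displaced from the vertex in the direction bisecting the (undirected) corner angle lie
outside the polygon. -/
def IsReflexCorner (i : ℤ) : Prop :=
  ∃ δ > (0 : ℝ), ∀ ε : ℝ, 0 < ε → ε < δ →
    Γ.vertex i + ε • ((Γ.vertex (i - 1) - Γ.vertex i) + (Γ.vertex (i + 1) - Γ.vertex i)) ∉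
      Γ.carrier

/-- The set of (indices in one period of) reflex corners of the polygon. -/
def reflexCorners : Set ℤ := {i : ℤ | 0 ≤ i ∧ i < Γ.n ∧ Γ.IsReflexCorner i}

/-- `(P, i)` is a feasible pair: `vertex i` is a reflex corner visible from `P` and the two
walls at the corner lie (weakly) on the same side of the line through `P` and `vertex i`. -/
def IsFeasible (P : Pt) (i : ℤ) : Prop :=
  Γ.IsReflexCorner i ∧ P ≠ Γ.vertex i ∧ Γ.Sees P (Γ.vertex i) ∧
  ∃ f : Pt →ₗ[ℝ] ℝ, f ≠ 0 ∧ f (Γ.vertex i - P) = 0 ∧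
    0 ≤ f (Γ.vertex (i - 1) - P) ∧ 0 ≤ f (Γ.vertex (i + 1) - P)

/-- `w` is a window of `P`: the segment from a reflex corner `C = vertex i` of a feasible
pair `(P, i)` to the farthest boundary point visible from `P` on the ray `P C` beyond `C`. -/
def IsWindow (P : Pt) (w : Set Pt) : Prop :=
  ∃ i : ℤ, ∃ W : Pt, Γ.IsFeasible P i ∧
    (∃ t : ℝ, 0 ≤ t ∧ W = Γ.vertex i + t • (Γ.vertex i - P)) ∧
    W ∈ frontier Γ.carrier ∧ Γ.Sees P W ∧
    (∀ W' : Pt, (∃ t : ℝ, 0 ≤ t ∧ W' = Γ.vertex i + t • (Γ.vertex i - P)) →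
      W' ∈ frontier Γ.carrier → Γ.Sees P W' → dist P W' ≤ dist P W) ∧
    w = segment ℝ (Γ.vertex i) W

/-- The union of all windows of points of `A`. -/
def windows (A : Set Pt) : Set Pt := ⋃₀ {w : Set Pt | ∃ P ∈ A, Γ.IsWindow P w}

/-- The (interiors of the) visibility regions of the visibility decomposition of the polygon
with respect to `A`: connected components of the interior of the polygon with all windows
removed. -/
def regionInteriors (A : Set Pt) : Set (Set Pt) :=
  {R : Set Pt | ∃ x ∈ interior Γ.carrier \ Γ.windows A,
    R = connectedComponentIn (interior Γ.carrier \ Γ.windows A) x}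

/-- `P` sees every point of `R`. -/
def SeesAll (P : Pt) (R : Set Pt) : Prop := ∀ x ∈ R, Γ.Sees P x

/-- `V(R)`: the set of points of `A` that see the (interior of the) region `R`. -/
def Vset (A R : Set Pt) : Set Pt := {P ∈ A | Γ.SeesAll P R}

/-- `R` is a sink of the visibility decomposition with respect to `A`. -/
def IsSink (A R : Set Pt) : Prop :=
  R ∈ Γ.regionInteriors A ∧
  ∀ R' ∈ Γ.regionInteriors A, AdjacentRegions R R' → Γ.Vset A R ⊆ Γ.Vset A R'

end SimplePolygon

/-!
For `P ∈ A` the set of points seen by `P` is closed, so by connectedness it suffices to show that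
it is also open at every interior point `x` off the windows. If the half-open segment `(P, x]`
runs through the interior, this follows by compactness of the segment, using at `P` that the
frontier near a frontier point is a pair of rays. Otherwise let `z` be the last frontier point
on `(P, x)`: the segment comes from the polygon and continues into its interior. Where the
frontier near `z` is straight, the polygon would then meet both open half-discs at `z`, making `z`
an interior point. So `z` is a genuine corner, and the same comparison of the sectors at `z` shows
that the corner is reflex and that both walls lie on one side of the line `Pz`: `(P, z)` is
feasible, and `x` lies on its window.
-/

open Metric Filter Topology Module

theorem IsPreconnected.subset_interior_of_disjoint_frontier {X : Type*} [TopologicalSpace X]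
    {U C : Set X} (hU : IsPreconnected U) (hUC : Disjoint U (frontier C)) {p : X} (hpU : p ∈ U)
    (hpC : p ∈ C) : U ⊆ interior C := by
  have hcover : U ⊆ interior C ∪ interior Cᶜ := by
    intro y hy
    have hyF : y ∉ frontier C := disjoint_left.1 hUC hy
    rw [frontier, Set.mem_sdiff, not_and_or, not_not] at hyF
    rw [interior_compl]
    exact hyF.symm
  rcases hU.subset_or_subset isOpen_interior isOpen_interior
    (disjoint_compl_right.mono interior_subset interior_subset) hcover with h | h
  · exact h
  · exact absurd hpC (interior_subset (h hpU))

theorem not_ball_subset_of_mem_frontier {X : Type*} [PseudoMetricSpace X] {C : Set X} {z : X}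
    (hz : z ∈ frontier C) {r : ℝ} (hr : 0 < r) : ¬ball z r ⊆ C :=
  fun h => hz.2 (mem_interior.2 ⟨_, h, isOpen_ball, mem_ball_self hr⟩)

section PlaneGeometry

variable {E : Type*} [AddCommGroup E] [Module ℝ E]

theorem add_smul_sub_mem_segment {x y : E} {t : ℝ} (ht : t ∈ Icc (0 : ℝ) 1) :
    x + t • (y - x) ∈ segment ℝ x y := by
  rw [segment_eq_image']
  exact mem_image_of_mem _ ht

theorem segment_add_smul_eq_image (x u : E) {a b : ℝ} (hab : a ≤ b) :
    segment ℝ (x + a • u) (x + b • u) = (fun σ : ℝ => x + σ • u) '' Icc a b := by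
  have h : (fun σ : ℝ => x + σ • u) = AffineMap.lineMap x (x + u) := by
    ext σ
    rw [AffineMap.lineMap_apply_module', add_sub_cancel_left, add_comm]
  rw [h, ← segment_eq_Icc hab, image_segment]
  simp only [← h]

theorem LinearIndependent.exists_dual_pair (hE : finrank ℝ E = 2) {u v : E}
    (h : LinearIndependent ℝ ![u, v]) :
    ∃ A B : E →ₗ[ℝ] ℝ, A u = 1 ∧ A v = 0 ∧ B u = 0 ∧ B v = 1 ∧ ∀ w, A w • u + B w • v = w := by
  let b := basisOfLinearIndependentOfCardEqFinrank h (by simp [hE])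
  have hb : ⇑b = ![u, v] := coe_basisOfLinearIndependentOfCardEqFinrank h _
  have hcoord : ∀ i j, b.coord i (b j) = if j = i then 1 else 0 := fun i j => by
    simp [Basis.coord_apply, Finsupp.single_apply]
  refine ⟨b.coord 0, b.coord 1, ?_, ?_, ?_, ?_, fun w => ?_⟩
  · simpa [hb] using hcoord 0 0
  · simpa [hb] using hcoord 0 1
  · simpa [hb] using hcoord 1 0
  · simpa [hb] using hcoord 1 1
  · simpa [Fin.sum_univ_two, hb, Basis.coord_apply] using b.sum_repr w

theorem exists_dual_pos_nonpos_of_not_sameRay (hE : finrank ℝ E = 2) {d e : E}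
    (h : ¬SameRay ℝ d e) : ∃ φ : E →ₗ[ℝ] ℝ, 0 < φ d ∧ φ e ≤ 0 := by
  by_cases hind : LinearIndependent ℝ ![d, e]
  · obtain ⟨A, -, hAd, hAe, -, -⟩ := hind.exists_dual_pair hE
    exact ⟨A, hAd.symm ▸ one_pos, hAe.le⟩
  have hneg : SameRay ℝ d (-e) :=
    (sameRay_or_sameRay_neg_iff_not_linearIndependent.2 hind).resolve_left h
  have hd : d ≠ 0 := fun hd => h (hd ▸ SameRay.zero_left e)
  have he : -e ≠ 0 := neg_ne_zero.2 fun he => h (he ▸ SameRay.zero_right d)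
  obtain ⟨r, hr, hre⟩ := hneg.exists_pos_left hd he
  obtain ⟨ψ, hψ⟩ : ∃ ψ : Dual ℝ E, ψ d ≠ 0 := by
    by_contra! hψ
    exact hd ((forall_dual_apply_eq_zero_iff ℝ d).1 hψ)
  refine ⟨ψ d • ψ, by simpa using mul_self_pos.2 hψ, ?_⟩
  have : e = -(r • d) := by rw [hre, neg_neg]
  simp only [this, map_neg, map_smul, LinearMap.smul_apply, smul_eq_mul]
  nlinarith [sq_nonneg (ψ d)]

end PlaneGeometry

section Sectors

variable {E : Type*} [NormedAddCommGroup E] [NormedSpace ℝ E]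

theorem dense_setOf_apply_ne {g : E →ₗ[ℝ] ℝ} (hg : g ≠ 0) (c : ℝ) : Dense {w | g w ≠ c} :=
  (dense_compl_singleton c).preimage
    (g.isOpenMap_of_finiteDimensional (g.surjective_or_eq_zero.resolve_right hg))

variable [FiniteDimensional ℝ E]

theorem IsOpen.subset_of_forall_apply_ne {U C : Set E} (hU : IsOpen U) (hC : IsClosed C)
    {g₁ g₂ : E →ₗ[ℝ] ℝ} (hg₁ : g₁ ≠ 0) (hg₂ : g₂ ≠ 0) (c₁ c₂ : ℝ)
    (h : ∀ w ∈ U, g₁ w ≠ c₁ → g₂ w ≠ c₂ → w ∈ C) : U ⊆ C := by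
  have hdense := (dense_setOf_apply_ne hg₁ c₁).inter_of_isOpen_left (dense_setOf_apply_ne hg₂ c₂)
    (isOpen_ne_fun g₁.continuous_of_finiteDimensional continuous_const)
  refine (hdense.open_subset_closure_inter hU).trans (hC.closure_subset_iff.2 ?_)
  rintro w ⟨hwU, h₁, h₂⟩
  exact h w hwU h₁ h₂

theorem ball_subset_of_meets_both_sides {C : Set E} (hC : IsClosed C) {z : E} {r : ℝ}
    {g : E →ₗ[ℝ] ℝ} (hF : ∀ w ∈ ball z r, w ∈ frontier C → g w = g z)
    {p q : E} (hp : p ∈ ball z r ∩ C) (hpg : g z < g p) (hq : q ∈ ball z r ∩ C)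
    (hqg : g q < g z) : ball z r ⊆ C := by
  have hg : g ≠ 0 := by rintro rfl; exact hpg.ne rfl
  have hside : ∀ S : Set E, Convex ℝ S → S ⊆ {w | g w ≠ g z} → ∀ x ∈ ball z r ∩ C, x ∈ S →
      ball z r ∩ S ⊆ interior C := by
    intro S hS hSg x hx hxS
    refine ((convex_ball z r).inter hS).isPreconnected.subset_interior_of_disjoint_frontier
      (disjoint_left.2 fun w hw hwF => hSg hw.2 (hF w hw.1 hwF)) ⟨hx.1, hxS⟩ hx.2
  have hpos := hside {w | g z < g w} (convex_halfSpace_gt g.isLinear _) (fun w hw => ne_of_gt hw)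
    p hp hpg
  have hneg := hside {w | g w < g z} (convex_halfSpace_lt g.isLinear _) (fun w hw => ne_of_lt hw)
    q hq hqg
  refine isOpen_ball.subset_of_forall_apply_ne hC hg hg (g z) (g z) fun w hw hwg _ => ?_
  rcases hwg.lt_or_gt with hlt | hgt
  · exact interior_subset (hneg ⟨hw, hlt⟩)
  · exact interior_subset (hpos ⟨hw, hgt⟩)

theorem ball_subset_of_meets_both_sectors {C : Set E} (hC : IsClosed C) {z : E} {r : ℝ}
    {A B : E →ₗ[ℝ] ℝ} (hF : ∀ w ∈ ball z r, w ∈ frontier C →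
      A z ≤ A w ∧ B z ≤ B w ∧ (A w = A z ∨ B w = B z))
    {m : E} (hm : m ∈ ball z r) (hmA : A m < A z) (hmB : B m < B z)
    {p q : E} (hp : p ∈ ball z r ∩ C) (hpA : A z < A p) (hpB : B z < B p)
    (hq : q ∈ ball z r ∩ C) (hqAB : A q < A z ∨ B q < B z) : ball z r ⊆ C := by
  have hA : A ≠ 0 := by rintro rfl; exact hpA.ne rfl
  have hB : B ≠ 0 := by rintro rfl; exact hpB.ne rfl
  have hpiece : ∀ S : Set E, Convex ℝ S → (∀ w ∈ S, A z ≤ A w → B z ≤ B w →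
      A w = A z ∨ B w = B z → False) → ∀ x ∈ ball z r ∩ C, x ∈ S → ball z r ∩ S ⊆ interior C := by
    intro S hS hSF x hx hxS
    refine ((convex_ball z r).inter hS).isPreconnected.subset_interior_of_disjoint_frontier
      (disjoint_left.2 fun w hw hwF => ?_) ⟨hx.1, hxS⟩ hx.2
    obtain ⟨h₁, h₂, h₃⟩ := hF w hw.1 hwF
    exact hSF w hw.2 h₁ h₂ h₃
  have hS₁ := hpiece ({w | A z < A w} ∩ {w | B z < B w})
    ((convex_halfSpace_gt A.isLinear _).inter (convex_halfSpace_gt B.isLinear _))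
    (fun w hw _ _ h => h.elim (hw.1.ne' ·) (hw.2.ne' ·)) p hp ⟨hpA, hpB⟩
  have hS₂ := hpiece {w | A w < A z} (convex_halfSpace_lt A.isLinear _)
    (fun w hw h _ _ => (h.trans_lt hw).false)
  have hS₃ := hpiece {w | B w < B z} (convex_halfSpace_lt B.isLinear _)
    (fun w hw _ h _ => (h.trans_lt hw).false)
  -- `C` meets one of the two half-planes covering the reflex sector, and through their common
  -- point `m` it then meets the other one as well
  have hS₂₃ : ball z r ∩ {w | A w < A z} ⊆ interior C ∧
      ball z r ∩ {w | B w < B z} ⊆ interior C := by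
    rcases hqAB with hqA | hqB
    · have h₂ := hS₂ q hq hqA
      exact ⟨h₂, hS₃ m ⟨hm, interior_subset (h₂ ⟨hm, hmA⟩)⟩ hmB⟩
    · have h₃ := hS₃ q hq hqB
      exact ⟨hS₂ m ⟨hm, interior_subset (h₃ ⟨hm, hmB⟩)⟩ hmA, h₃⟩
  refine isOpen_ball.subset_of_forall_apply_ne hC hA hB (A z) (B z) fun w hw hwA hwB => ?_
  rcases hwA.lt_or_gt with hA' | hA'
  · exact interior_subset (hS₂₃.1 ⟨hw, hA'⟩)
  rcases hwB.lt_or_gt with hB' | hB'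
  · exact interior_subset (hS₂₃.2 ⟨hw, hB'⟩)
  · exact interior_subset (hS₁ ⟨hw, hA', hB'⟩)

end Sectors

section LocalWedge

variable {E : Type*} [NormedAddCommGroup E] [NormedSpace ℝ E]

theorem eventually_add_smul_mem_ball {r : ℝ} (hr : 0 < r) (z u : E) :
    ∀ᶠ s in 𝓝[>] (0 : ℝ), z + s • u ∈ ball z r :=
  (((by fun_prop : Continuous fun s : ℝ => z + s • u).tendsto' 0 z (by simp)).eventually
    (ball_mem_nhds z hr)).filter_mono nhdsWithin_le_nhds

structure IsLocalWedge (C : Set E) (z e₁ e₂ : E) : Prop where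
  not_sameRay : ¬SameRay ℝ e₁ e₂
  frontier_subset : ∃ r > 0, ∀ w ∈ ball z r, w ∈ frontier C →
    ∃ s : ℝ, 0 ≤ s ∧ (w = z + s • e₁ ∨ w = z + s • e₂)
  eventually_mem_frontier :
    ∀ᶠ s in 𝓝[>] (0 : ℝ), z + s • e₁ ∈ frontier C ∧ z + s • e₂ ∈ frontier C

namespace IsLocalWedge

variable {C : Set E} {z e₁ e₂ d : E}

theorem left_ne_zero (hw : IsLocalWedge C z e₁ e₂) : e₁ ≠ 0 :=
  fun h => hw.not_sameRay (h ▸ SameRay.zero_left e₂)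

theorem right_ne_zero (hw : IsLocalWedge C z e₁ e₂) : e₂ ≠ 0 :=
  fun h => hw.not_sameRay (h ▸ SameRay.zero_right e₁)

theorem not_sameRay_of_eventually_mem_interior (hw : IsLocalWedge C z e₁ e₂) (hd : d ≠ 0)
    (hpos : ∀ᶠ s in 𝓝[>] (0 : ℝ), z + s • d ∈ interior C) :
    ¬SameRay ℝ d e₁ ∧ ¬SameRay ℝ d e₂ := by
  have key : ∀ e : E, e ≠ 0 → (∀ᶠ s in 𝓝[>] (0 : ℝ), z + s • e ∈ frontier C) →
      ¬SameRay ℝ d e := by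
    rintro e he hF hde
    obtain ⟨c, hc, rfl⟩ := hde.exists_pos_left hd he
    obtain ⟨s, hsF, hsI⟩ := (hF.and (eventually_nhdsGT_zero_mul_left hc hpos)).exists
    rw [smul_smul, mul_comm] at hsF
    exact hsF.2 hsI
  exact ⟨key e₁ hw.left_ne_zero (hw.eventually_mem_frontier.mono fun _ h => h.1),
    key e₂ hw.right_ne_zero (hw.eventually_mem_frontier.mono fun _ h => h.2)⟩

variable [FiniteDimensional ℝ E]

/-- A segment cannot cross the frontier of a closed set at a point where the frontier is locally
straight. -/
theorem false_of_not_linearIndependent (hE : finrank ℝ E = 2) (hC : IsClosed C)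
    (hw : IsLocalWedge C z e₁ e₂) (hz : z ∈ frontier C) (hd : d ≠ 0)
    (hpos : ∀ᶠ s in 𝓝[>] (0 : ℝ), z + s • d ∈ interior C)
    (hneg : ∀ᶠ s in 𝓝[>] (0 : ℝ), z - s • d ∈ C)
    (hdep : ¬LinearIndependent ℝ ![e₁, e₂]) : False := by
  obtain ⟨hd₁, hd₂⟩ := hw.not_sameRay_of_eventually_mem_interior hd hpos
  have hopp : SameRay ℝ e₁ (-e₂) :=
    (sameRay_or_sameRay_neg_iff_not_linearIndependent.2 hdep).resolve_left hw.not_sameRay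
  obtain ⟨c, -, hc⟩ := hopp.exists_nonneg_left hw.left_ne_zero
  have hind : LinearIndependent ℝ ![e₁, d] := by
    by_contra hdep'
    rcases sameRay_or_sameRay_neg_iff_not_linearIndependent.2 hdep' with h | h
    · exact hd₁ h.symm
    · exact hd₂ (sameRay_neg_iff.1 (h.symm.trans hopp fun h0 => absurd h0 hw.left_ne_zero))
  obtain ⟨-, g, -, -, hge₁, hgd, -⟩ := hind.exists_dual_pair hE
  have hge₂ : g e₂ = 0 := by
    rw [← neg_neg e₂, ← hc, map_neg, map_smul, hge₁, smul_zero, neg_zero]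
  obtain ⟨r, hr, hF⟩ := hw.frontier_subset
  obtain ⟨s, hs : 0 < s, hsI, hsC, hsB, hsB'⟩ := (eventually_mem_nhdsWithin.and (hpos.and (hneg.and
    ((eventually_add_smul_mem_ball hr z d).and (eventually_add_smul_mem_ball hr z (-d)))))).exists
  rw [smul_neg, ← sub_eq_add_neg] at hsB'
  refine not_ball_subset_of_mem_frontier hz hr (ball_subset_of_meets_both_sides hC
    (g := g) ?_ ⟨hsB, interior_subset hsI⟩ ?_ ⟨hsB', hsC⟩ ?_)
  · intro w hw' hwF
    obtain ⟨t, -, rfl | rfl⟩ := hF w hw' hwF <;> simp [hge₁, hge₂]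
  · simpa [hgd] using hs
  · simpa [hgd] using hs

theorem exists_ball_not_meets_both_sectors (hC : IsClosed C) (hw : IsLocalWedge C z e₁ e₂)
    (hz : z ∈ frontier C) {A B : E →ₗ[ℝ] ℝ} (hA₁ : A e₁ = 1) (hA₂ : A e₂ = 0) (hB₁ : B e₁ = 0)
    (hB₂ : B e₂ = 1) :
    ∃ r > 0, ∀ p ∈ ball z r ∩ C, A z < A p → B z < B p →
      ∀ q ∈ ball z r ∩ C, A q < A z ∨ B q < B z → False := by
  obtain ⟨r, hr, hF⟩ := hw.frontier_subset
  have hF' : ∀ w ∈ ball z r, w ∈ frontier C →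
      A z ≤ A w ∧ B z ≤ B w ∧ (A w = A z ∨ B w = B z) := by
    intro w hw' hwF
    obtain ⟨t, ht, rfl | rfl⟩ := hF w hw' hwF <;> simp [hA₁, hA₂, hB₁, hB₂, ht]
  obtain ⟨ν, hν : 0 < ν, hνB⟩ :=
    (eventually_mem_nhdsWithin.and (eventually_add_smul_mem_ball hr z (-(e₁ + e₂)))).exists
  exact ⟨r, hr, fun p hp hpA hpB q hq hqAB => not_ball_subset_of_mem_frontier hz hr
    (ball_subset_of_meets_both_sectors hC hF' hνB (by simp [hA₁, hA₂, hν])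
      (by simp [hB₁, hB₂, hν]) hp hpA hpB hq hqAB)⟩

/-- At a genuine corner crossed by a segment from the inside, the convex sector lies outside `C`
and the line of the segment leaves both walls on one side. -/
theorem corner_of_linearIndependent (hE : finrank ℝ E = 2) (hC : IsClosed C)
    (hw : IsLocalWedge C z e₁ e₂) (hz : z ∈ frontier C) (hd : d ≠ 0)
    (hpos : ∀ᶠ s in 𝓝[>] (0 : ℝ), z + s • d ∈ interior C)
    (hneg : ∀ᶠ s in 𝓝[>] (0 : ℝ), z - s • d ∈ C)
    (hind : LinearIndependent ℝ ![e₁, e₂]) :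
    (∀ᶠ ε in 𝓝[>] (0 : ℝ), z + ε • (e₁ + e₂) ∉ C) ∧
      ∃ f : E →ₗ[ℝ] ℝ, f ≠ 0 ∧ f d = 0 ∧ 0 ≤ f e₁ ∧ 0 ≤ f e₂ := by
  obtain ⟨hd₁, hd₂⟩ := hw.not_sameRay_of_eventually_mem_interior hd hpos
  obtain ⟨A, B, hA₁, hA₂, hB₁, hB₂, hAB⟩ := hind.exists_dual_pair hE
  obtain ⟨r, hr, hexcl⟩ := hw.exists_ball_not_meets_both_sectors hC hz hA₁ hA₂ hB₁ hB₂
  obtain ⟨s, hs : 0 < s, hsI, hsC, hsB, hsB'⟩ := (eventually_mem_nhdsWithin.and (hpos.and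
    (hneg.and ((eventually_add_smul_mem_ball hr z d).and
      (eventually_add_smul_mem_ball hr z (-d)))))).exists
  rw [smul_neg, ← sub_eq_add_neg] at hsB'
  have hp : z + s • d ∈ ball z r ∩ C := ⟨hsB, interior_subset hsI⟩
  have hq : z - s • d ∈ ball z r ∩ C := ⟨hsB', hsC⟩
  have hαβ : A d * B d ≤ 0 := by
    by_contra! h
    rcases pos_and_pos_or_neg_and_neg_of_mul_pos h with ⟨hα, hβ⟩ | ⟨hα, hβ⟩
    · exact hexcl _ hp (by simpa using mul_pos hs hα) (by simpa using mul_pos hs hβ) _ hq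
        (Or.inl (by simpa using mul_pos hs hα))
    · exact hexcl _ hq (by rw [map_sub, map_smul, smul_eq_mul]; nlinarith)
        (by rw [map_sub, map_smul, smul_eq_mul]; nlinarith) _ hp
        (Or.inl (by simpa using mul_neg_of_pos_of_neg hs hα))
  have hdecomp := hAB d
  -- `d` does not point along a wall, so it has a negative coordinate
  have hneg_coord : A d < 0 ∨ B d < 0 := by
    by_contra! h
    rcases h.1.eq_or_lt with hα | hα
    · apply hd₂
      rw [← hdecomp, ← hα, zero_smul, zero_add]
      exact SameRay.sameRay_nonneg_smul_left e₂ h.2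
    rcases h.2.eq_or_lt with hβ | hβ
    · apply hd₁
      rw [← hdecomp, ← hβ, zero_smul, add_zero]
      exact SameRay.sameRay_nonneg_smul_left e₁ h.1
    · exact (mul_pos hα hβ).not_ge hαβ
  refine ⟨?_, |B d| • A + |A d| • B, ?_, ?_, by simp [hA₁, hB₁], by simp [hA₂, hB₂]⟩
  · filter_upwards [eventually_mem_nhdsWithin, eventually_add_smul_mem_ball hr z (e₁ + e₂)]
      with ε (hε : 0 < ε) hεB hεC
    exact hexcl _ ⟨hεB, hεC⟩ (by simp [hA₁, hA₂, hε]) (by simp [hB₁, hB₂, hε]) _ hp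
      (by simpa [mul_neg_iff, hs, hs.not_gt] using hneg_coord)
  · intro hf
    have h₁ := LinearMap.congr_fun hf e₁
    have h₂ := LinearMap.congr_fun hf e₂
    simp only [LinearMap.add_apply, LinearMap.smul_apply, hA₁, hA₂, hB₁, hB₂, smul_eq_mul,
      mul_one, mul_zero, add_zero, zero_add, LinearMap.zero_apply, abs_eq_zero] at h₁ h₂
    exact hd (by rw [← hdecomp, h₁, h₂, zero_smul, zero_smul, add_zero])
  · simp only [LinearMap.add_apply, LinearMap.smul_apply, smul_eq_mul]
    rcases le_total 0 (A d) with hα | hα <;> rcases le_total 0 (B d) with hβ | hβ <;>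
      simp only [abs_of_nonneg, abs_of_nonpos, *] <;> nlinarith

end IsLocalWedge

end LocalWedge

section Cone

variable {E : Type*} [NormedAddCommGroup E] [NormedSpace ℝ E] {C : Set E} {z d : E}

/-- The open cone `φ₁ > 0, φ₂ > 0` around `d`, with `φⱼ ≤ 0` on the wall `eⱼ`, avoids the
frontier near `z` and therefore lies in the interior there. -/
theorem IsLocalWedge.eventually_add_smul_mem [FiniteDimensional ℝ E] (hE : finrank ℝ E = 2)
    {e₁ e₂ : E} (hw : IsLocalWedge C z e₁ e₂) (hzC : z ∈ C) (hd : d ≠ 0)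
    (hpos : ∀ᶠ s in 𝓝[>] (0 : ℝ), z + s • d ∈ interior C) :
    ∀ᶠ p : E × ℝ in 𝓝 (d, 0), 0 ≤ p.2 → z + p.2 • p.1 ∈ C := by
  obtain ⟨hd₁, hd₂⟩ := hw.not_sameRay_of_eventually_mem_interior hd hpos
  obtain ⟨φ₁, hφ₁d, hφ₁e⟩ := exists_dual_pos_nonpos_of_not_sameRay hE hd₁
  obtain ⟨φ₂, hφ₂d, hφ₂e⟩ := exists_dual_pos_nonpos_of_not_sameRay hE hd₂
  obtain ⟨r, hr, hF⟩ := hw.frontier_subset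
  set V := ball z r ∩ ({w | φ₁ z < φ₁ w} ∩ {w | φ₂ z < φ₂ w})
  have hV : V ⊆ interior C := by
    obtain ⟨s, hs : 0 < s, hsI, hsB⟩ :=
      (eventually_mem_nhdsWithin.and (hpos.and (eventually_add_smul_mem_ball hr z d))).exists
    refine ((convex_ball z r).inter ((convex_halfSpace_gt φ₁.isLinear _).inter
      (convex_halfSpace_gt φ₂.isLinear _))).isPreconnected.subset_interior_of_disjoint_frontier
      (disjoint_left.2 ?_) (p := z + s • d) ⟨hsB, ?_, ?_⟩ (interior_subset hsI)
    · rintro w ⟨hwB, h₁, h₂⟩ hwF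
      obtain ⟨t, ht, rfl | rfl⟩ := hF w hwB hwF
      · simp only [Set.mem_ofPred_eq, map_add, map_smul, smul_eq_mul] at h₁
        nlinarith
      · simp only [Set.mem_ofPred_eq, map_add, map_smul, smul_eq_mul] at h₂
        nlinarith
    · simpa using mul_pos hs hφ₁d
    · simpa using mul_pos hs hφ₂d
  have hcont : Continuous fun p : E × ℝ => z + p.2 • p.1 := by fun_prop
  have hnear : ∀ᶠ p : E × ℝ in 𝓝 (d, 0),
      0 < φ₁ p.1 ∧ 0 < φ₂ p.1 ∧ z + p.2 • p.1 ∈ ball z r :=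
    ((φ₁.continuous_of_finiteDimensional.comp continuous_fst).tendsto (d, 0)).eventually
      (lt_mem_nhds hφ₁d) |>.and <|
    ((φ₂.continuous_of_finiteDimensional.comp continuous_fst).tendsto (d, 0)).eventually
      (lt_mem_nhds hφ₂d) |>.and <|
    (hcont.tendsto' (d, 0) z (by simp)).eventually (ball_mem_nhds z hr)
  filter_upwards [hnear] with p ⟨h₁, h₂, hB⟩ hp
  rcases hp.eq_or_lt with h0 | h0
  · rw [← h0, zero_smul, add_zero]
    exact hzC
  · exact interior_subset (hV ⟨hB, by simpa using mul_pos h0 h₁, by simpa using mul_pos h0 h₂⟩)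

theorem eventually_add_smul_mem_of_mem_interior (hz : z ∈ interior C) :
    ∀ᶠ p : E × ℝ in 𝓝 (d, 0), 0 ≤ p.2 → z + p.2 • p.1 ∈ C :=
  (((by fun_prop : Continuous fun p : E × ℝ => z + p.2 • p.1).tendsto' (d, 0) z
    (by simp)).eventually (isOpen_interior.mem_nhds hz)).mono fun _ h _ => interior_subset h

/-- Compactness of `[0, 1]` upgrades the local conditions at both ends to: all segments from `z`
to points near `z + d` lie in `C`. -/
theorem eventually_forall_add_smul_mem
    (hstart : ∀ᶠ p : E × ℝ in 𝓝 (d, 0), 0 ≤ p.2 → z + p.2 • p.1 ∈ C)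
    (hint : ∀ t ∈ Ioc (0 : ℝ) 1, z + t • d ∈ interior C) :
    ∀ᶠ y in 𝓝 d, ∀ t ∈ Icc (0 : ℝ) 1, z + t • y ∈ C := by
  have hloc : ∀ t ∈ Icc (0 : ℝ) 1, ∀ᶠ p : E × ℝ in 𝓝 (d, t), 0 ≤ p.2 → z + p.2 • p.1 ∈ C := by
    intro t ht
    rcases ht.1.eq_or_lt with rfl | ht0
    · exact hstart
    have hcont : Continuous fun p : E × ℝ => z + p.2 • p.1 := by fun_prop
    exact ((hcont.tendsto (d, t)).eventually (isOpen_interior.mem_nhds (hint t ⟨ht0, ht.2⟩))).mono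
      fun _ h _ => interior_subset h
  exact (isCompact_Icc.eventually_forall_of_forall_eventually
    (P := fun y t => 0 ≤ t → z + t • y ∈ C) hloc).mono
    fun y hy t ht => hy t ht ht.1

end Cone

theorem finrank_pt : finrank ℝ Pt = 2 := finrank_euclideanSpace_fin

namespace SimplePolygon

variable (Γ : SimplePolygon)

theorem sees_iff {P y : Pt} :
    Γ.Sees P y ↔ ∀ t ∈ Icc (0 : ℝ) 1, P + t • (y - P) ∈ Γ.carrier := by
  rw [Sees, segment_eq_image', image_subset_iff]
  rfl

theorem sees_add_smul_iff {P u : Pt} {s : ℝ} (hs : 0 ≤ s) :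
    Γ.Sees P (P + s • u) ↔ ∀ σ ∈ Icc 0 s, P + σ • u ∈ Γ.carrier := by
  have h := segment_add_smul_eq_image P u hs
  rw [zero_smul, add_zero] at h
  rw [Sees, h, image_subset_iff]
  rfl

theorem isClosed_setOf_sees (P : Pt) : IsClosed {y | Γ.Sees P y} := by
  simp only [sees_iff, Set.ofPred_forall]
  exact isClosed_biInter fun t _ => Γ.compact.isClosed.preimage (by fun_prop)

theorem mem_of_sees {P y : Pt} (h : Γ.Sees P y) : P ∈ Γ.carrier :=
  h (left_mem_segment ℝ P y)

def edge (i : ℤ) : Set Pt := segment ℝ (Γ.vertex i) (Γ.vertex (i + 1))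

theorem n_pos : (0 : ℤ) < Γ.n := by
  have := Γ.three_le
  omega

theorem vertex_eq_of_dvd {i j : ℤ} (h : (Γ.n : ℤ) ∣ i - j) : Γ.vertex i = Γ.vertex j := by
  obtain ⟨k, hk⟩ := h
  rw [show i = j + k * Γ.n by linarith]
  exact (Function.Periodic.int_mul Γ.periodic k) j

theorem vertex_emod (i : ℤ) : Γ.vertex (i % Γ.n) = Γ.vertex i :=
  Γ.vertex_eq_of_dvd Int.dvd_emod_sub_self

theorem dvd_of_vertex_eq {i j : ℤ} (h : Γ.vertex i = Γ.vertex j) : (Γ.n : ℤ) ∣ i - j := by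
  have hmod : i % Γ.n = j % Γ.n :=
    Γ.vertex_inj _ _ (Int.emod_nonneg _ Γ.n_pos.ne') (Int.emod_lt_of_pos _ Γ.n_pos)
      (Int.emod_nonneg _ Γ.n_pos.ne') (Int.emod_lt_of_pos _ Γ.n_pos)
      (by rw [vertex_emod, vertex_emod, h])
  exact Int.ModEq.dvd hmod.symm

theorem not_dvd_one : ¬(Γ.n : ℤ) ∣ 1 := fun h => by
  have := Int.le_of_dvd one_pos h
  have := Γ.three_le
  omega

theorem vertex_ne_vertex_add_one (i : ℤ) : Γ.vertex i ≠ Γ.vertex (i + 1) := fun h =>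
  Γ.not_dvd_one (by simpa using (Γ.dvd_of_vertex_eq h).neg_right)

theorem edge_eq_of_dvd {i j : ℤ} (h : (Γ.n : ℤ) ∣ i - j) : Γ.edge i = Γ.edge j := by
  rw [edge, edge, Γ.vertex_eq_of_dvd h,
    Γ.vertex_eq_of_dvd (i := i + 1) (j := j + 1) (by rwa [add_sub_add_right_eq_sub])]

theorem isClosed_edge (i : ℤ) : IsClosed (Γ.edge i) := by
  rw [edge, ← convexHull_pair (𝕜 := ℝ)]
  exact ((toFinite _).isCompact_convexHull ℝ).isClosed

theorem edge_sub_one (i : ℤ) : Γ.edge (i - 1) = segment ℝ (Γ.vertex i) (Γ.vertex (i - 1)) := by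
  rw [edge, sub_add_cancel, segment_symm]

theorem frontier_eq_iUnion_edge : frontier Γ.carrier = ⋃ i, Γ.edge i :=
  Γ.boundary_eq

theorem edge_subset_frontier (i : ℤ) : Γ.edge i ⊆ frontier Γ.carrier :=
  Γ.frontier_eq_iUnion_edge ▸ subset_iUnion Γ.edge i

theorem exists_mem_edge_of_mem_frontier {w : Pt} (hw : w ∈ frontier Γ.carrier) :
    ∃ k ∈ Ico 0 (Γ.n : ℤ), w ∈ Γ.edge k := by
  obtain ⟨i, hi⟩ := mem_iUnion.1 (Γ.frontier_eq_iUnion_edge ▸ hw)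
  refine ⟨i % Γ.n, ⟨Int.emod_nonneg _ Γ.n_pos.ne', Int.emod_lt_of_pos _ Γ.n_pos⟩, ?_⟩
  rwa [Γ.edge_eq_of_dvd Int.dvd_emod_sub_self]

theorem dvd_of_vertex_mem_edge {i j : ℤ} (h : Γ.vertex i ∈ Γ.edge j) :
    (Γ.n : ℤ) ∣ j - i ∨ (Γ.n : ℤ) ∣ j - (i - 1) := by
  by_contra! hc
  obtain ⟨h₁, h₂⟩ := hc
  by_cases h₃ : (Γ.n : ℤ) ∣ j - (i + 1)
  · have hmem : Γ.vertex i ∈ Γ.edge i ∩ Γ.edge j := ⟨left_mem_segment ℝ _ _, h⟩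
    rw [edge, edge, Γ.adj_edges i j h₃ h₁] at hmem
    have := dvd_add (Γ.dvd_of_vertex_eq hmem) h₃
    rw [show i - j + (j - (i + 1)) = -1 by ring, dvd_neg] at this
    exact Γ.not_dvd_one this
  · refine disjoint_left.1 (Γ.nonadj_edges i j h₁ h₃ fun h₄ => h₂ ?_) (left_mem_segment ℝ _ _) h
    rw [show j - (i - 1) = -(i - (j + 1)) by ring]
    exact h₄.neg_right

theorem dvd_of_mem_edge_of_ne_vertex {z : Pt} {j k : ℤ} (hk : z ∈ Γ.edge k) (hj : z ∈ Γ.edge j)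
    (hv : ∀ i, z ≠ Γ.vertex i) : (Γ.n : ℤ) ∣ j - k := by
  by_contra h₁
  by_cases h₂ : (Γ.n : ℤ) ∣ j - (k + 1)
  · have hmem : z ∈ Γ.edge k ∩ Γ.edge j := ⟨hk, hj⟩
    rw [edge, edge, Γ.adj_edges k j h₂ h₁] at hmem
    exact hv j hmem
  by_cases h₃ : (Γ.n : ℤ) ∣ k - (j + 1)
  · have hmem : z ∈ Γ.edge j ∩ Γ.edge k := ⟨hj, hk⟩
    rw [edge, edge, Γ.adj_edges j k h₃ fun h => h₁ (by simpa using h.neg_right)] at hmem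
    exact hv k hmem
  · exact disjoint_left.1 (Γ.nonadj_edges k j h₁ h₂ h₃) hk hj

theorem exists_ball_frontier_subset_edges (z : Pt) :
    ∃ r > 0, ∀ w ∈ ball z r, w ∈ frontier Γ.carrier → ∃ j, z ∈ Γ.edge j ∧ w ∈ Γ.edge j := by
  set K := ⋃ j ∈ {j | j ∈ Ico 0 (Γ.n : ℤ) ∧ z ∉ Γ.edge j}, Γ.edge j
  have hK : IsClosed K := ((finite_Ico 0 (Γ.n : ℤ)).subset fun _ hj => hj.1).isClosed_biUnion
    fun j _ => Γ.isClosed_edge j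
  have hzK : z ∉ K := by
    simp only [K, mem_iUnion]
    exact fun ⟨j, ⟨_, hj⟩, hz⟩ => hj hz
  obtain ⟨r, hr, hball⟩ := Metric.isOpen_iff.1 hK.isOpen_compl z hzK
  refine ⟨r, hr, fun w hw hwF => ?_⟩
  obtain ⟨k, hk, hwk⟩ := Γ.exists_mem_edge_of_mem_frontier hwF
  by_contra! hz
  exact hball hw (mem_biUnion (x := k) ⟨hk, fun h => hz k h hwk⟩ hwk)

theorem isLocalWedge_vertex (i : ℤ) : IsLocalWedge Γ.carrier (Γ.vertex i)
    (Γ.vertex (i - 1) - Γ.vertex i) (Γ.vertex (i + 1) - Γ.vertex i) where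
  not_sameRay h := by
    have hu₁ : Γ.vertex (i - 1) - Γ.vertex i ≠ 0 := sub_ne_zero.2 fun h =>
      Γ.vertex_ne_vertex_add_one (i - 1) (by rw [sub_add_cancel, h])
    have hu₂ : Γ.vertex (i + 1) - Γ.vertex i ≠ 0 :=
      sub_ne_zero.2 (Γ.vertex_ne_vertex_add_one i).symm
    obtain ⟨c, hc, hcu⟩ := h.exists_pos_left hu₁ hu₂
    set s := min 1 c
    have hs : 0 < s := lt_min one_pos hc
    -- a point of both walls other than the corner would contradict `adj_edges`
    have hmem : Γ.vertex i + s • (Γ.vertex (i - 1) - Γ.vertex i) ∈ Γ.edge (i - 1) ∩ Γ.edge i := by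
      constructor
      · rw [edge_sub_one]
        exact add_smul_sub_mem_segment ⟨hs.le, min_le_left _ _⟩
      · rw [show s • (Γ.vertex (i - 1) - Γ.vertex i) = (s / c) • (Γ.vertex (i + 1) - Γ.vertex i) by
          rw [← hcu, smul_smul, div_mul_cancel₀ _ hc.ne']]
        exact add_smul_sub_mem_segment ⟨by positivity, div_le_one_of_le₀ (min_le_right _ _) hc.le⟩
    rw [edge, edge, Γ.adj_edges (i - 1) i (by simp) (by simpa using Γ.not_dvd_one)] at hmem
    exact smul_ne_zero hs.ne' hu₁ (by simpa using hmem)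
  frontier_subset := by
    obtain ⟨r, hr, hF⟩ := Γ.exists_ball_frontier_subset_edges (Γ.vertex i)
    refine ⟨r, hr, fun w hw hwF => ?_⟩
    obtain ⟨j, hij, hwj⟩ := hF w hw hwF
    rcases Γ.dvd_of_vertex_mem_edge hij with h | h
    · rw [Γ.edge_eq_of_dvd h, edge, segment_eq_image'] at hwj
      obtain ⟨s, hs, rfl⟩ := hwj
      exact ⟨s, hs.1, Or.inr rfl⟩
    · rw [Γ.edge_eq_of_dvd h, edge_sub_one, segment_eq_image'] at hwj
      obtain ⟨s, hs, rfl⟩ := hwj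
      exact ⟨s, hs.1, Or.inl rfl⟩
  eventually_mem_frontier := by
    filter_upwards [Ioc_mem_nhdsGT one_pos] with s hs
    refine ⟨Γ.edge_subset_frontier (i - 1) ?_, Γ.edge_subset_frontier i
      (add_smul_sub_mem_segment ⟨hs.1.le, hs.2⟩)⟩
    rw [edge_sub_one]
    exact add_smul_sub_mem_segment ⟨hs.1.le, hs.2⟩

theorem isLocalWedge_of_mem_edge {z : Pt} {k : ℤ} (hz : z ∈ Γ.edge k) (hv : ∀ i, z ≠ Γ.vertex i) :
    IsLocalWedge Γ.carrier z (Γ.vertex (k + 1) - Γ.vertex k)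
      (-(Γ.vertex (k + 1) - Γ.vertex k)) := by
  set b := Γ.vertex (k + 1) - Γ.vertex k
  have hb : b ≠ 0 := sub_ne_zero.2 (Γ.vertex_ne_vertex_add_one k).symm
  obtain ⟨a, ⟨ha0, ha1⟩, rfl⟩ : ∃ a ∈ Icc (0 : ℝ) 1, Γ.vertex k + a • b = z := by
    rwa [edge, segment_eq_image'] at hz
  have ha0' : 0 < a := ha0.lt_of_ne (by rintro rfl; exact hv k (by simp))
  have ha1' : a < 1 := ha1.lt_of_ne (by rintro rfl; exact hv (k + 1) (by simp [b]))
  refine ⟨fun h => hb (eq_zero_of_sameRay_self_neg h), ?_, ?_⟩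
  · obtain ⟨r, hr, hF⟩ := Γ.exists_ball_frontier_subset_edges (Γ.vertex k + a • b)
    refine ⟨r, hr, fun w hw hwF => ?_⟩
    obtain ⟨j, hzj, hwj⟩ := hF w hw hwF
    rw [Γ.edge_eq_of_dvd (Γ.dvd_of_mem_edge_of_ne_vertex hz hzj hv), edge, segment_eq_image']
      at hwj
    obtain ⟨μ, -, rfl⟩ := hwj
    rcases le_total a μ with h | h
    · exact ⟨μ - a, sub_nonneg.2 h, Or.inl (by module)⟩
    · exact ⟨a - μ, sub_nonneg.2 h, Or.inr (by module)⟩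
  · filter_upwards [Ioc_mem_nhdsGT (lt_min ha0' (sub_pos.2 ha1'))] with s ⟨hs0, hs⟩
    have hs₁ := hs.trans (min_le_left _ _)
    have hs₂ := hs.trans (min_le_right _ _)
    refine ⟨Γ.edge_subset_frontier k ?_, Γ.edge_subset_frontier k ?_⟩
    · rw [show Γ.vertex k + a • b + s • b = Γ.vertex k + (a + s) • b by module]
      exact add_smul_sub_mem_segment ⟨by linarith, by linarith⟩
    · rw [show Γ.vertex k + a • b + s • -b = Γ.vertex k + (a - s) • b by module]
      exact add_smul_sub_mem_segment ⟨by linarith, by linarith⟩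

theorem exists_isLocalWedge {z : Pt} (hz : z ∈ frontier Γ.carrier) :
    ∃ e₁ e₂, IsLocalWedge Γ.carrier z e₁ e₂ := by
  by_cases hv : ∃ i, z = Γ.vertex i
  · obtain ⟨i, rfl⟩ := hv
    exact ⟨_, _, Γ.isLocalWedge_vertex i⟩
  · obtain ⟨k, -, hk⟩ := Γ.exists_mem_edge_of_mem_frontier hz
    exact ⟨_, _, Γ.isLocalWedge_of_mem_edge hk (not_exists.1 hv)⟩

theorem eventually_sees_of_forall_mem_interior {P x : Pt} (hP : P ∈ Γ.carrier)
    (hint : ∀ t ∈ Ioc (0 : ℝ) 1, P + t • (x - P) ∈ interior Γ.carrier) :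
    ∀ᶠ y in 𝓝 x, Γ.Sees P y := by
  have hstart : ∀ᶠ p : Pt × ℝ in 𝓝 (x - P, 0), 0 ≤ p.2 → P + p.2 • p.1 ∈ Γ.carrier := by
    by_cases hPi : P ∈ interior Γ.carrier
    · exact eventually_add_smul_mem_of_mem_interior hPi
    have hd : x - P ≠ 0 := fun h => hPi (by simpa [h] using hint 1 ⟨one_pos, le_rfl⟩)
    obtain ⟨e₁, e₂, hw⟩ := Γ.exists_isLocalWedge ⟨subset_closure hP, hPi⟩
    exact hw.eventually_add_smul_mem finrank_pt hP hd
      (mem_of_superset (Ioc_mem_nhdsGT one_pos) hint)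
  have := ((continuous_sub_right P).tendsto x).eventually
    (eventually_forall_add_smul_mem hstart hint)
  exact this.mono fun y hy => (Γ.sees_iff).2 hy

theorem exists_last_mem_frontier {P x : Pt} (hsee : Γ.Sees P x) (hx : x ∈ interior Γ.carrier)
    (h : ∃ t ∈ Ioc (0 : ℝ) 1, P + t • (x - P) ∉ interior Γ.carrier) :
    ∃ τ ∈ Ioo (0 : ℝ) 1, P + τ • (x - P) ∈ frontier Γ.carrier ∧
      ∀ t ∈ Ioc τ 1, P + t • (x - P) ∈ interior Γ.carrier := by
  obtain ⟨t₁, ht₁, ht₁I⟩ := h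
  set T := Icc (0 : ℝ) 1 ∩ {t | P + t • (x - P) ∉ interior Γ.carrier}
  have hT : IsCompact T := isCompact_Icc.inter_right
    (isOpen_interior.isClosed_compl.preimage (by fun_prop))
  have hτ := hT.sSup_mem ⟨t₁, ⟨ht₁.1.le, ht₁.2⟩, ht₁I⟩
  have hle : ∀ t ∈ T, t ≤ sSup T := fun t ht => le_csSup hT.bddAbove ht
  refine ⟨sSup T, ⟨ht₁.1.trans_le (hle t₁ ⟨⟨ht₁.1.le, ht₁.2⟩, ht₁I⟩),
    hτ.1.2.lt_of_ne fun h1 => hτ.2 (by simpa [h1] using hx)⟩,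
    ⟨subset_closure ((Γ.sees_iff).1 hsee _ hτ.1), hτ.2⟩, fun t ht => ?_⟩
  by_contra htI
  exact (hle t ⟨⟨(hτ.1.1.trans ht.1.le), ht.2⟩, htI⟩).not_gt ht.1

theorem Sees.of_mem_segment {Γ : SimplePolygon} {P x y : Pt} (h : Γ.Sees P x)
    (hy : y ∈ segment ℝ P x) : Γ.Sees P y :=
  ((convex_segment P x).segment_subset (left_mem_segment ℝ P x) hy).trans h

theorem isFeasible_of_corner {P : Pt} {i : ℤ} (hP : P ≠ Γ.vertex i)
    (hsee : Γ.Sees P (Γ.vertex i))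
    (hout : ∀ᶠ ε in 𝓝[>] (0 : ℝ), Γ.vertex i +
      ε • ((Γ.vertex (i - 1) - Γ.vertex i) + (Γ.vertex (i + 1) - Γ.vertex i)) ∉ Γ.carrier)
    {f : Pt →ₗ[ℝ] ℝ} (hf : f ≠ 0) (hfv : f (Γ.vertex i - P) = 0)
    (hf₁ : 0 ≤ f (Γ.vertex (i - 1) - Γ.vertex i)) (hf₂ : 0 ≤ f (Γ.vertex (i + 1) - Γ.vertex i)) :
    Γ.IsFeasible P i := by
  obtain ⟨δ, hδ, hsub⟩ := mem_nhdsGT_iff_exists_Ioo_subset.1 hout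
  refine ⟨⟨δ, hδ, fun ε hε hεδ => hsub ⟨hε, hεδ⟩⟩, hP, hsee, f, hf, hfv, ?_, ?_⟩
  · rwa [← sub_add_sub_cancel _ (Γ.vertex i), map_add, hfv, add_zero]
  · rwa [← sub_add_sub_cancel _ (Γ.vertex i), map_add, hfv, add_zero]

theorem exists_isFeasible_of_last_mem_frontier {P x : Pt} (hsee : Γ.Sees P x) {τ : ℝ}
    (hτ : τ ∈ Ioo (0 : ℝ) 1) (hτF : P + τ • (x - P) ∈ frontier Γ.carrier)
    (hafter : ∀ t ∈ Ioc τ 1, P + t • (x - P) ∈ interior Γ.carrier) :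
    ∃ i, P + τ • (x - P) = Γ.vertex i ∧ Γ.IsFeasible P i := by
  set d := x - P
  have hd : d ≠ 0 := fun h => hτF.2 (by simpa [h] using hafter 1 ⟨hτ.2, le_rfl⟩)
  have hpos : ∀ᶠ s in 𝓝[>] (0 : ℝ), P + τ • d + s • d ∈ interior Γ.carrier := by
    filter_upwards [Ioc_mem_nhdsGT (sub_pos.2 hτ.2)] with s hs
    rw [add_assoc, ← add_smul]
    exact hafter _ ⟨by linarith [hs.1], by linarith [hs.2]⟩
  have hneg : ∀ᶠ s in 𝓝[>] (0 : ℝ), P + τ • d - s • d ∈ Γ.carrier := by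
    filter_upwards [Ioc_mem_nhdsGT hτ.1] with s hs
    rw [add_sub_assoc, ← sub_smul]
    exact (Γ.sees_iff).1 hsee _ ⟨by linarith [hs.2], by linarith [hs.1, hτ.2]⟩
  by_cases hv : ∃ i, P + τ • d = Γ.vertex i
  swap
  · obtain ⟨k, -, hk⟩ := Γ.exists_mem_edge_of_mem_frontier hτF
    refine ((Γ.isLocalWedge_of_mem_edge hk (not_exists.1 hv)).false_of_not_linearIndependent
      finrank_pt Γ.compact.isClosed hτF hd hpos hneg ?_).elim
    exact sameRay_or_sameRay_neg_iff_not_linearIndependent.1 (Or.inr (by simp [SameRay.refl]))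
  obtain ⟨i, hi⟩ := hv
  rw [hi] at hτF hpos hneg
  have hw := Γ.isLocalWedge_vertex i
  by_cases hind : LinearIndependent ℝ ![Γ.vertex (i - 1) - Γ.vertex i,
    Γ.vertex (i + 1) - Γ.vertex i]
  swap
  · exact (hw.false_of_not_linearIndependent finrank_pt Γ.compact.isClosed hτF hd hpos hneg
      hind).elim
  obtain ⟨hout, f, hf, hfd, hf₁, hf₂⟩ :=
    hw.corner_of_linearIndependent finrank_pt Γ.compact.isClosed hτF hd hpos hneg hind
  have hvP : Γ.vertex i - P = τ • d := by rw [← hi, add_sub_cancel_left]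
  refine ⟨i, hi, Γ.isFeasible_of_corner ?_ ?_ hout hf (by rw [hvP, map_smul, hfd, smul_zero])
    hf₁ hf₂⟩
  · intro hP
    rw [hP, sub_self, eq_comm, smul_eq_zero] at hvP
    exact hvP.elim hτ.1.ne' hd
  · exact hsee.of_mem_segment (hi ▸ add_smul_sub_mem_segment ⟨hτ.1.le, hτ.2.le⟩)

theorem isBounded_setOf_add_smul_mem {P u : Pt} (hu : u ≠ 0) :
    Bornology.IsBounded {s : ℝ | P + s • u ∈ Γ.carrier} := by
  obtain ⟨R, hR⟩ := Γ.compact.isBounded.subset_closedBall P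
  refine (isBounded_closedBall (x := (0 : ℝ)) (r := R / ‖u‖)).subset fun s hs => ?_
  have h := hR hs
  rw [mem_closedBall, dist_eq_norm, add_sub_cancel_left, norm_smul] at h
  rwa [mem_closedBall, dist_zero_right, le_div_iff₀ (norm_pos_iff.2 hu)]

theorem exists_mem_frontier_sees_ge {P u : Pt} (hu : u ≠ 0) {t : ℝ} (ht : 0 ≤ t)
    (hsee : Γ.Sees P (P + t • u)) :
    ∃ t' ≥ t, P + t' • u ∈ frontier Γ.carrier ∧ Γ.Sees P (P + t' • u) := by
  set S := {s | t ≤ s ∧ Γ.Sees P (P + s • u)}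
  have hS : IsCompact S := Metric.isCompact_of_isClosed_isBounded
    (isClosed_Ici.inter ((Γ.isClosed_setOf_sees P).preimage (by fun_prop)))
    ((Γ.isBounded_setOf_add_smul_mem hu).subset fun s hs => hs.2 (right_mem_segment ℝ _ _))
  have hmax := hS.sSup_mem ⟨t, le_rfl, hsee⟩
  have hs₀ : 0 ≤ sSup S := ht.trans hmax.1
  refine ⟨sSup S, hmax.1, ⟨subset_closure (hmax.2 (right_mem_segment ℝ _ _)), fun hI => ?_⟩, hmax.2⟩
  obtain ⟨ε, hε, hball⟩ := Metric.eventually_nhds_iff.1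
    (((by fun_prop : Continuous fun s : ℝ => P + s • u).tendsto (sSup S)).eventually
      (isOpen_interior.mem_nhds hI))
  have hmore : sSup S + ε / 2 ∈ S := by
    refine ⟨by linarith [hmax.1], (Γ.sees_add_smul_iff (by linarith)).2 fun σ hσ => ?_⟩
    rcases le_or_gt σ (sSup S) with h | h
    · exact (Γ.sees_add_smul_iff hs₀).1 hmax.2 σ ⟨hσ.1, h⟩
    · refine interior_subset (hball ?_)
      rw [Real.dist_eq, abs_of_pos (sub_pos.2 h)]
      linarith [hσ.2]
  linarith [le_csSup hS.bddAbove hmore]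

theorem mem_windows_of_isFeasible {A : Set Pt} {P x : Pt} (hPA : P ∈ A) {i : ℤ}
    (hfeas : Γ.IsFeasible P i) {t : ℝ} (ht : 1 ≤ t) (hx : x = P + t • (Γ.vertex i - P))
    (hsee : Γ.Sees P x) : x ∈ Γ.windows A := by
  set u := Γ.vertex i - P
  have hu : u ≠ 0 := sub_ne_zero.2 hfeas.2.1.symm
  have hv : Γ.vertex i = P + (1 : ℝ) • u := by rw [one_smul, add_sub_cancel]
  set T := {s : ℝ | 1 ≤ s ∧ P + s • u ∈ frontier Γ.carrier ∧ Γ.Sees P (P + s • u)}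
  have hT : IsCompact T := Metric.isCompact_of_isClosed_isBounded
    (isClosed_Ici.inter ((isClosed_frontier.preimage (by fun_prop)).inter
      ((Γ.isClosed_setOf_sees P).preimage (by fun_prop))))
    ((Γ.isBounded_setOf_add_smul_mem hu).subset fun s hs => hs.2.2 (right_mem_segment ℝ _ _))
  obtain ⟨t', htt', ht'F, ht'S⟩ := Γ.exists_mem_frontier_sees_ge hu (by linarith) (hx ▸ hsee)
  have hle : ∀ s ∈ T, s ≤ sSup T := fun s hs => le_csSup hT.bddAbove hs
  have hW := hT.sSup_mem ⟨t', ht.trans htt', ht'F, ht'S⟩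
  have hdist : ∀ s ≥ (0 : ℝ), dist P (P + s • u) = s * ‖u‖ := fun s hs => by
    rw [dist_comm, dist_eq_norm, add_sub_cancel_left, norm_smul, Real.norm_of_nonneg hs]
  refine ⟨segment ℝ (Γ.vertex i) (P + sSup T • u), ⟨P, hPA, i, _, hfeas,
    ⟨sSup T - 1, by linarith [hW.1], by rw [hv]; module⟩, hW.2.1, hW.2.2, ?_, rfl⟩, ?_⟩
  · rintro W' ⟨s, hs, rfl⟩ hW'F hW'S
    have hs' : Γ.vertex i + s • u = P + (1 + s) • u := by rw [hv]; module
    rw [hs'] at hW'F hW'S ⊢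
    rw [hdist _ (by linarith), hdist _ (by linarith [hW.1])]
    exact mul_le_mul_of_nonneg_right (hle _ ⟨by linarith, hW'F, hW'S⟩) (norm_nonneg _)
  · rw [hv, segment_add_smul_eq_image P u (by linarith [hW.1]), hx]
    exact mem_image_of_mem _ ⟨ht, htt'.trans (hle t' ⟨ht.trans htt', ht'F, ht'S⟩)⟩

theorem eventually_sees_of_not_mem_windows {A : Set Pt} {P x : Pt} (hPA : P ∈ A)
    (hsee : Γ.Sees P x) (hx : x ∈ interior Γ.carrier) (hxw : x ∉ Γ.windows A) :
    ∀ᶠ y in 𝓝 x, Γ.Sees P y := by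
  by_cases hint : ∀ t ∈ Ioc (0 : ℝ) 1, P + t • (x - P) ∈ interior Γ.carrier
  · exact Γ.eventually_sees_of_forall_mem_interior (Γ.mem_of_sees hsee) hint
  simp only [not_forall, exists_prop] at hint
  obtain ⟨τ, hτ, hτF, hafter⟩ := Γ.exists_last_mem_frontier hsee hx hint
  obtain ⟨i, hi, hfeas⟩ := Γ.exists_isFeasible_of_last_mem_frontier hsee hτ hτF hafter
  refine absurd (Γ.mem_windows_of_isFeasible hPA hfeas (one_le_inv₀ hτ.1 |>.2 hτ.2.le) ?_ hsee)
    hxw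
  rw [← hi, add_sub_cancel_left, smul_smul, inv_mul_cancel₀ hτ.1.ne', one_smul, add_sub_cancel]

theorem sees_of_isPreconnected {A K : Set Pt} (hK : IsPreconnected K)
    (hKA : K ⊆ interior Γ.carrier \ Γ.windows A) {P x y : Pt} (hPA : P ∈ A) (hx : x ∈ K)
    (hy : y ∈ K) (hsee : Γ.Sees P x) : Γ.Sees P y := by
  have hopen : ∀ q ∈ K, Γ.Sees P q → q ∈ interior {q | Γ.Sees P q} := fun q hq hq' =>
    mem_interior_iff_mem_nhds.2 (Γ.eventually_sees_of_not_mem_windows hPA hq' (hKA hq).1 (hKA hq).2)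
  have hsub : K ⊆ interior {q | Γ.Sees P q} :=
    hK.subset_of_closure_inter_subset isOpen_interior ⟨x, hx, hopen x hx hsee⟩
      fun q ⟨hqcl, hqK⟩ =>
        hopen q hqK (closure_minimal interior_subset (Γ.isClosed_setOf_sees P) hqcl)
  exact interior_subset (hsub hy)

end SimplePolygon

theorem visibility_region_same_view_general (Γ : SimplePolygon) (A : Set Pt)
    (z : Pt)
    (x y : Pt)
    (hx : x ∈ connectedComponentIn (interior Γ.carrier \ Γ.windows A) z)
    (hy : y ∈ connectedComponentIn (interior Γ.carrier \ Γ.windows A) z) :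
    {P ∈ A | Γ.Sees P x} = {P ∈ A | Γ.Sees P y} := by
  have hK := isPreconnected_connectedComponentIn (x := z) (F := interior Γ.carrier \ Γ.windows A)
  have hKA := connectedComponentIn_subset (interior Γ.carrier \ Γ.windows A) z
  ext P
  exact and_congr_right fun hPA =>
    ⟨Γ.sees_of_isPreconnected hK hKA hPA hx hy, Γ.sees_of_isPreconnected hK hKA hPA hy hx⟩

/-- any two points in the interior of a single visibility region of the
visibility decomposition with respect to `A` are seen by the same subset of `A`. -/
theorem visibility_region_same_view (Γ : SimplePolygon) (A : Set Pt)
    (hA : A ⊆ Γ.carrier) (hAfin : A.Finite)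
    (z : Pt) (hz : z ∈ interior Γ.carrier \ Γ.windows A)
    (x y : Pt)
    (hx : x ∈ connectedComponentIn (interior Γ.carrier \ Γ.windows A) z)
    (hy : y ∈ connectedComponentIn (interior Γ.carrier \ Γ.windows A) z) :
    {P ∈ A | Γ.Sees P x} = {P ∈ A | Γ.Sees P y} :=
  visibility_region_same_view_general Γ A z x y hx hy
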